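/- For each data point (x̄, ȳ) ∈ R^n × R and each strictly increasing continuous surjective activation function σ : R → R, the function w ↦ |ȳ − σ(⟨w̄, x̄⟩ + w_0)| of w = (w_0, w̄) ∈ R^{n+1} is quasiconvex. Consequently, the objective w ↦ max_{i=1..N} |ȳ^i − σ(⟨w̄, x̄^i⟩ + w_0)| is quasiconvex. -/
import Mathlib


open scoped RealInnerProductSpace

lemma sup'_quasiconvex {α E : Type*} [AddCommGroup E] [Module ℝ E]
    {s : Set E} (t : Finset α) (ht : t.Nonempty) (f : α → E → ℝ)
    (hf : ∀ i, QuasiconvexOn ℝ s (f i)) :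
    QuasiconvexOn ℝ s (fun x => t.sup' ht fun i => f i x) := by
  induction ht using Finset.Nonempty.cons_induction with
  | singleton a => simpa using hf a
  | cons a t ha hts ih =>
      have : (fun x => (Finset.cons a t ha).sup' (Finset.cons_nonempty ha) fun i => f i x)
          = (f a) ⊔ (fun x => t.sup' hts fun i => f i x) := by
        funext x
        rw [Finset.sup'_cons]
        rfl
      rw [this]
      exact (hf a).sup ih

/-- each absolute deviation w ↦ |ȳⁱ − σ(⟨w̄, x̄ⁱ⟩ + w₀)| is quasiconvex,
and hence the maximal absolute deviation is quasiconvex. -/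
theorem stmt11 (n N : ℕ) (hne : (Finset.univ : Finset (Fin N)).Nonempty)
    (σ : ℝ → ℝ) (hσc : Continuous σ) (hσm : StrictMono σ) (hσs : Function.Surjective σ)
    (xb : Fin N → EuclideanSpace ℝ (Fin n)) (yb : Fin N → ℝ) :
    (∀ i, QuasiconvexOn ℝ Set.univ
        (fun w : ℝ × EuclideanSpace ℝ (Fin n) => |yb i - σ (⟪w.2, xb i⟫ + w.1)|)) ∧
      QuasiconvexOn ℝ Set.univ
        (fun w : ℝ × EuclideanSpace ℝ (Fin n) =>
          Finset.univ.sup' hne fun i => |yb i - σ (⟪w.2, xb i⟫ + w.1)|) := by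
  set e := StrictMono.orderIsoOfSurjective σ hσm hσs with he
  have key : ∀ i, QuasiconvexOn ℝ Set.univ
      (fun w : ℝ × EuclideanSpace ℝ (Fin n) => |yb i - σ (⟪w.2, xb i⟫ + w.1)|) := by
    intro i
    intro r
    have hlin : IsLinearMap ℝ (fun w : ℝ × EuclideanSpace ℝ (Fin n) => ⟪w.2, xb i⟫ + w.1) := by
      constructor
      · intro u v
        simp [inner_add_left]; ring
      · intro c u
        simp [real_inner_smul_left, mul_add, Finset.mul_sum, mul_assoc]
    have hset : {w : ℝ × EuclideanSpace ℝ (Fin n) | w ∈ Set.univ ∧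
        |yb i - σ (⟪w.2, xb i⟫ + w.1)| ≤ r}
        = {w : ℝ × EuclideanSpace ℝ (Fin n) | e.symm (yb i - r) ≤ ⟪w.2, xb i⟫ + w.1}
          ∩ {w | ⟪w.2, xb i⟫ + w.1 ≤ e.symm (yb i + r)} := by
      ext w
      have hew : σ (⟪w.2, xb i⟫ + w.1) = e (⟪w.2, xb i⟫ + w.1) := rfl
      simp only [Set.mem_setOf_eq, Set.mem_inter_iff, Set.mem_univ, true_and, abs_le]
      constructor
      · rintro ⟨h1, h2⟩
        refine ⟨e.symm_apply_le.mpr (by rw [← hew]; linarith),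
          e.le_symm_apply.mpr (by rw [← hew]; linarith)⟩
      · rintro ⟨h1, h2⟩
        have h1' := e.symm_apply_le.mp h1
        have h2' := e.le_symm_apply.mp h2
        rw [← hew] at h1' h2'
        exact ⟨by linarith, by linarith⟩
    rw [hset]
    exact (convex_halfSpace_ge hlin _).inter (convex_halfSpace_le hlin _)
  exact ⟨key, sup'_quasiconvex _ hne _ key⟩
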